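/- arXiv:0909.2242 — 7 statements merged into one kernel-verified Lean document; each statement's English description precedes it below -/
import Mathlib

section
/- For any arm sequence A, the relation ≻_A on boxes of fixed color is transitive: if b'' ≻_A b' and b' ≻_A b, then b'' ≻_A b. -/
/-- The content `c(b) = y - x` of a box `b = (x, y)` (boxes modeled as pairs of integers). -/
def cont (b : ℤ × ℤ) : ℤ := b.2 - b.1

/-- The order `≻_A` determined by an arm sequence `A`: for boxes `b', b` with
`c(b') - c(b) = n t`, `t > 0`, we have `b' ≻_A b` iff `y' - y > A_t`; for
`c(b) - c(b') = n t`, `t > 0`, we have `b' ≻_A b` iff not `b ≻_A b'`. -/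
def SuccA (n : ℤ) (A : ℤ → ℤ) (b' b : ℤ × ℤ) : Prop :=
  (∃ t : ℤ, 0 < t ∧ cont b' - cont b = n * t ∧ b'.2 - b.2 > A t) ∨
  (∃ t : ℤ, 0 < t ∧ cont b - cont b' = n * t ∧ ¬ (b.2 - b'.2 > A t))

/-! Extend the arm sequence `A` to all `t ≠ 0` so that `b' ≻_A b` becomes the single condition
`armThreshold A t < y' - y`, where `c(b') - c(b) = n t`. Transitivity then reduces to the
subadditivity `armThreshold A (t + u) ≤ armThreshold A t + armThreshold A u + 1`, which the
quasi-additivity of `A` gives in every sign pattern of `t`, `u`, `t + u`. -/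

def armThreshold (A : ℤ → ℤ) (t : ℤ) : ℤ := if 0 < t then A t else -A (-t) - 1

theorem armThreshold_add_le (A : ℤ → ℤ)
    (hA : ∀ t u : ℤ, 1 ≤ t → 1 ≤ u → A (t + u) = A t + A u ∨ A (t + u) = A t + A u + 1)
    {t u : ℤ} (ht : t ≠ 0) (hu : u ≠ 0) (htu : t + u ≠ 0) :
    armThreshold A (t + u) ≤ armThreshold A t + armThreshold A u + 1 := by
  have quasi_add : ∀ p q r, 0 < p → 0 < q → p + q = r →
      A p + A q ≤ A r ∧ A r ≤ A p + A q + 1 := by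
    rintro p q r hp hq rfl
    rcases hA p q hp hq with h | h <;> omega
  wlog htu_le : t ≤ u generalizing t u
  · rw [add_comm t u, add_comm (armThreshold A t)]
    exact this hu ht (by omega) (by omega)
  unfold armThreshold
  rcases ht.lt_or_gt with ht | ht
  · rcases hu.lt_or_gt with hu | hu
    · have := quasi_add (-t) (-u) (-(t + u)) (by omega) (by omega) (by ring)
      split_ifs <;> omega
    · rcases htu.lt_or_gt with htu | htu
      · have := quasi_add u (-(t + u)) (-t) hu (by omega) (by ring)
        split_ifs <;> omega
      · have := quasi_add (t + u) (-t) u htu (by omega) (by ring)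
        split_ifs <;> omega
  · have := quasi_add t u (t + u) ht (by omega) rfl
    split_ifs <;> omega

theorem succA_iff_armThreshold_lt {n : ℤ} (hn : n ≠ 0) (A : ℤ → ℤ) {b' b : ℤ × ℤ} {t : ℤ}
    (ht : t ≠ 0) (hd : cont b' - cont b = n * t) :
    SuccA n A b' b ↔ armThreshold A t < b'.2 - b.2 := by
  have hd' : cont b - cont b' = n * -t := by rw [mul_neg, ← hd]; ring
  simp only [SuccA, hd, hd', mul_right_inj' hn, armThreshold]
  rcases ht.lt_or_gt with ht | ht
  · simp [ht, ht.not_gt]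
    omega
  · simp [ht, ht.not_gt]

theorem succA_trans_general (n : ℤ) (hn : 3 ≤ n) (A : ℤ → ℤ)
    (hA2 : ∀ t u : ℤ, 1 ≤ t → 1 ≤ u →
      A (t + u) = A t + A u ∨ A (t + u) = A t + A u + 1)
    (b b' b'' : ℤ × ℤ)
    (hc1 : n ∣ (cont b' - cont b)) (hc2 : n ∣ (cont b'' - cont b'))
    (hd1 : cont b ≠ cont b') (hd2 : cont b' ≠ cont b'') (hd3 : cont b ≠ cont b'')
    (h1 : SuccA n A b'' b') (h2 : SuccA n A b' b) :
    SuccA n A b'' b := by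
  have hn0 : n ≠ 0 := by omega
  obtain ⟨t, ht⟩ := hc1
  obtain ⟨u, hu⟩ := hc2
  have hsum : cont b'' - cont b = n * (t + u) := by rw [mul_add, ← ht, ← hu]; ring
  have ht0 : t ≠ 0 := by rintro rfl; omega
  have hu0 : u ≠ 0 := by rintro rfl; omega
  have htu0 : t + u ≠ 0 := by intro h; rw [h] at hsum; omega
  rw [succA_iff_armThreshold_lt hn0 A hu0 hu] at h1
  rw [succA_iff_armThreshold_lt hn0 A ht0 ht] at h2
  rw [succA_iff_armThreshold_lt hn0 A htu0 hsum]
  linarith [armThreshold_add_le A hA2 ht0 hu0 htu0]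

/-- For any arm sequence `A`, the relation `≻_A` is transitive on boxes of a fixed color
(pairwise congruent, pairwise distinct contents). -/
theorem succA_trans (n : ℤ) (hn : 3 ≤ n) (A : ℤ → ℤ)
    (hA1 : ∀ t : ℤ, 1 ≤ t → t - 1 ≤ A t ∧ A t ≤ (n - 1) * t)
    (hA2 : ∀ t u : ℤ, 1 ≤ t → 1 ≤ u →
      A (t + u) = A t + A u ∨ A (t + u) = A t + A u + 1)
    (b b' b'' : ℤ × ℤ)
    (hc1 : n ∣ (cont b' - cont b)) (hc2 : n ∣ (cont b'' - cont b'))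
    (hd1 : cont b ≠ cont b') (hd2 : cont b' ≠ cont b'') (hd3 : cont b ≠ cont b'')
    (h1 : SuccA n A b'' b') (h2 : SuccA n A b' b) :
    SuccA n A b'' b :=
  succA_trans_general n hn A hA2 b b' b'' hc1 hc2 hd1 hd2 hd3 h1 h2
end

section
/- Let b and b' be boxes with c(b') - c(b) = nt for some t > 0, where the contents are congruent modulo n. Then b' ≻_{A^H} b (i.e., y' - y > ⌈nt/2⌉ - 1) if and only if h(b') ≥ h(b), where h(b) = x + y is the height of the box. -/
theorem succAH_iff_height_general (n : ℤ) (x y x' y' t : ℤ)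
    (hc : (y' - x') - (y - x) = n * t) :
    (y' - y > ⌈((n : ℚ) * (t : ℚ)) / 2⌉ - 1) ↔ x + y ≤ x' + y' := by
  rw [gt_iff_lt, Int.sub_one_lt_iff, Int.ceil_le, div_le_iff₀ two_pos]
  have h_content : (n : ℚ) * t = ((y' - x') - (y - x) : ℤ) := by exact_mod_cast hc.symm
  rw [h_content]
  -- `2 (y' - y) - (c(b') - c(b)) = h(b') - h(b)`
  exact_mod_cast (by omega : (y' - x') - (y - x) ≤ (y' - y) * 2 ↔ x + y ≤ x' + y')

/-- For `n ≥ 3` and boxes `b = (x, y)`, `b' = (x', y')` with `c(b') - c(b) = n t`, `t > 0`,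
we have `b' ≻_{A^H} b`, i.e. `y' - y > ⌈nt/2⌉ - 1`, if and only if `h(b') ≥ h(b)`,
where `c = y - x` is the content and `h = x + y` is the height. -/
theorem succAH_iff_height (n : ℤ) (hn : 3 ≤ n) (x y x' y' t : ℤ) (ht : 0 < t)
    (hc : (y' - x') - (y - x) = n * t) :
    (y' - y > ⌈((n : ℚ) * (t : ℚ)) / 2⌉ - 1) ↔ x + y ≤ x' + y' :=
  succAH_iff_height_general n x y x' y' t hc
end

section
/- Let λ be a partition, b an addable box and b' a removable box of λ with the same content residue mod n. If h(b) = h(b') + 1, then λ contains an A^H-illegal box (i.e., a box a with hook(a) = nt and arm(a) = A^H_t for some t ≥ 1). -/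
/-- The content of a box with cell coordinates `(i, j)` (row `i`, column `j`, zero-indexed;
in the paper's half-integer coordinates the box is `(i + 1/2, j + 1/2)`). -/
def content (p : ℕ × ℕ) : ℤ := (p.2 : ℤ) - (p.1 : ℤ)

/-- The height `h(b) = x_b + y_b` of a box (in the paper's half-integer coordinates). -/
def height (p : ℕ × ℕ) : ℤ := (p.1 : ℤ) + (p.2 : ℤ) + 1

/-- A box is addable if adding it yields a Young diagram. -/
def IsAddable (μ : YoungDiagram) (p : ℕ × ℕ) : Prop :=
  p ∉ μ ∧ ∃ ν : YoungDiagram, ν.cells = insert p μ.cells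

/-- A box is removable if deleting it yields a Young diagram. -/
def IsRemovable (μ : YoungDiagram) (p : ℕ × ℕ) : Prop :=
  p ∈ μ ∧ ∃ ν : YoungDiagram, ν.cells = μ.cells.erase p

/-- The arm sequence `A^H_t = ⌈n t / 2⌉ - 1`. -/
def AH (n : ℕ) (t : ℤ) : ℤ := ⌈((n : ℚ) * (t : ℚ)) / 2⌉ - 1

/-- The arm length of a box in a Young diagram. -/
def armLen (μ : YoungDiagram) (p : ℕ × ℕ) : ℤ := (μ.rowLen p.1 : ℤ) - (p.2 : ℤ) - 1

/-- The hook length of a box in a Young diagram. -/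
def hookLen (μ : YoungDiagram) (p : ℕ × ℕ) : ℤ :=
  (μ.rowLen p.1 : ℤ) - (p.2 : ℤ) + (μ.colLen p.2 : ℤ) - (p.1 : ℤ) - 1

/-- A box of `μ` is `A^H`-illegal if `hook = n t` and `arm = A^H_t` for some `t ≥ 1`. -/
def IllegalAH (n : ℕ) (μ : YoungDiagram) (p : ℕ × ℕ) : Prop :=
  p ∈ μ ∧ ∃ t : ℤ, 1 ≤ t ∧ hookLen μ p = (n : ℤ) * t ∧ armLen μ p = AH n t

/-- A partition is `A^H`-regular if it has no `A^H`-illegal boxes. -/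
def RegularAH (n : ℕ) (μ : YoungDiagram) : Prop := ∀ p, ¬ IllegalAH n μ p

/-- The order `≻_{A^H}` on boxes whose contents are congruent mod `n` (and distinct):
`b' ≻ b` iff (for `c(b') - c(b) = n t`, `t > 0`) `y_{b'} - y_b > A^H_t`, and
(for `c(b) - c(b') = n t`, `t > 0`) the negation of the corresponding condition. -/
def SuccAH (n : ℕ) (b' b : ℕ × ℕ) : Prop :=
  (∃ t : ℤ, 0 < t ∧ content b' - content b = (n : ℤ) * t ∧ (b'.2 : ℤ) - (b.2 : ℤ) > AH n t) ∨
  (∃ t : ℤ, 0 < t ∧ content b - content b' = (n : ℤ) * t ∧ ¬ ((b.2 : ℤ) - (b'.2 : ℤ) > AH n t))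

open Classical in
/-- The finite set of addable boxes of a Young diagram. -/
noncomputable def addables (μ : YoungDiagram) : Finset (ℕ × ℕ) :=
  ((Finset.range (μ.colLen 0 + 1)) ×ˢ (Finset.range (μ.rowLen 0 + 1))).filter (IsAddable μ)

open Classical in
/-- The finite set of removable boxes of a Young diagram. -/
noncomputable def removables (μ : YoungDiagram) : Finset (ℕ × ℕ) :=
  μ.cells.filter (IsRemovable μ)

/-- Addable boxes of color `i`. -/
noncomputable def addablesC (n : ℕ) (i : ZMod n) (μ : YoungDiagram) : Finset (ℕ × ℕ) :=
  (addables μ).filter (fun b => ((content b : ZMod n) = i))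

/-- Removable boxes of color `i`. -/
noncomputable def removablesC (n : ℕ) (i : ZMod n) (μ : YoungDiagram) : Finset (ℕ × ℕ) :=
  (removables μ).filter (fun b => ((content b : ZMod n) = i))

/-! Write `b = (x, y)` and `b' = (x', y')`. The height condition `x + y = x' + y' + 1` makes
`c(b) - c(b') = 2 (y - y') - 1` odd, say `= n t`. The box in the row of one of `b, b'` and
the column of the other (`(x, y')` if `y' < y`, else `(x', y)`) lies in `λ`, and since `b` is
addable and `b'` removable its hook is `|n t| = 2k + 1` and its arm is `k = ⌈|n t| / 2⌉ - 1`. -/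

lemma AH_eq_of_mul_eq_odd {n : ℕ} {t k : ℤ} (h : (n : ℤ) * t = 2 * k + 1) : AH n t = k := by
  have hq : (n : ℚ) * t / 2 = k + 1 / 2 := by
    rw [show (n : ℚ) * t = ((n * t : ℤ) : ℚ) by push_cast; ring, h]
    push_cast; ring
  rw [AH, hq, sub_eq_iff_eq_add, Int.ceil_eq_iff]
  push_cast
  constructor <;> linarith

section Corners

variable {μ : YoungDiagram} {p q : ℕ × ℕ}

lemma IsAddable.mem_of_le (h : IsAddable μ p) (hqp : q ≤ p) (hne : q ≠ p) : q ∈ μ := by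
  obtain ⟨-, ν, hν⟩ := h
  have hq : q ∈ ν.cells := ν.isLowerSet hqp (by simp [hν])
  simpa [hν, hne] using hq

lemma IsRemovable.notMem_of_le (h : IsRemovable μ p) (hpq : p ≤ q) (hne : q ≠ p) : q ∉ μ := by
  obtain ⟨-, ν, hν⟩ := h
  intro hq
  have hp : p ∈ ν.cells := ν.isLowerSet hpq (by simp [hν, hne, hq])
  simp [hν] at hp

lemma IsAddable.rowLen_eq {i j : ℕ} (h : IsAddable μ (i, j)) : μ.rowLen i = j := by
  refine le_antisymm (not_lt.1 fun hlt => h.1 (μ.mem_iff_lt_rowLen.2 hlt)) ?_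
  rcases j with _ | j
  · exact Nat.zero_le _
  · exact μ.mem_iff_lt_rowLen.1 (h.mem_of_le (by simp) (by simp))

lemma IsAddable.colLen_eq {i j : ℕ} (h : IsAddable μ (i, j)) : μ.colLen j = i := by
  refine le_antisymm (not_lt.1 fun hlt => h.1 (μ.mem_iff_lt_colLen.2 hlt)) ?_
  rcases i with _ | i
  · exact Nat.zero_le _
  · exact μ.mem_iff_lt_colLen.1 (h.mem_of_le (by simp) (by simp))

lemma IsRemovable.rowLen_eq {i j : ℕ} (h : IsRemovable μ (i, j)) : μ.rowLen i = j + 1 :=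
  le_antisymm (not_lt.1 fun hlt => h.notMem_of_le (by simp) (by simp) (μ.mem_iff_lt_rowLen.2 hlt))
    (μ.mem_iff_lt_rowLen.1 h.1)

lemma IsRemovable.colLen_eq {i j : ℕ} (h : IsRemovable μ (i, j)) : μ.colLen j = i + 1 :=
  le_antisymm (not_lt.1 fun hlt => h.notMem_of_le (by simp) (by simp) (μ.mem_iff_lt_colLen.2 hlt))
    (μ.mem_iff_lt_colLen.1 h.1)

end Corners

lemma illegalAH_of_odd_hook {n : ℕ} {μ : YoungDiagram} {p : ℕ × ℕ} {t k : ℤ} (hp : p ∈ μ)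
    (hk : 0 ≤ k) (ht : (n : ℤ) * t = 2 * k + 1) (hhook : hookLen μ p = 2 * k + 1)
    (harm : armLen μ p = k) : IllegalAH n μ p :=
  ⟨hp, t, pos_of_mul_pos_right (by omega : 0 < (n : ℤ) * t) (Int.natCast_nonneg n),
    hhook.trans ht.symm, harm.trans (AH_eq_of_mul_eq_odd ht).symm⟩

theorem illegal_of_height_succ_general (n : ℕ) (μ : YoungDiagram) (b b' : ℕ × ℕ)
    (hb : IsAddable μ b) (hb' : IsRemovable μ b')
    (hcong : (n : ℤ) ∣ (content b - content b'))
    (hh : height b = height b' + 1) :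
    ∃ a, IllegalAH n μ a := by
  obtain ⟨x, y⟩ := b
  obtain ⟨x', y'⟩ := b'
  obtain ⟨t, ht⟩ := hcong
  have hr := hb.rowLen_eq
  have hc := hb.colLen_eq
  have hr' := hb'.rowLen_eq
  have hc' := hb'.colLen_eq
  simp only [content, height] at ht hh
  rcases lt_or_ge y' y with hy | hy
  · refine ⟨(x, y'), illegalAH_of_odd_hook (t := t) (k := y - y' - 1) ?_ ?_ ?_ ?_ ?_⟩
    · exact μ.mem_iff_lt_rowLen.2 (hr ▸ hy)
    · omega
    · linarith
    · simp only [hookLen, hr, hc']; omega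
    · simp only [armLen, hr]
  · refine ⟨(x', y), illegalAH_of_odd_hook (t := -t) (k := y' - y) ?_ ?_ ?_ ?_ ?_⟩
    · exact μ.mem_iff_lt_rowLen.2 (by omega)
    · omega
    · linarith
    · simp only [hookLen, hr', hc]; omega
    · simp only [armLen, hr']; omega

/-- If `b` is addable and `b'` removable with the same content residue mod `n` and
`h(b) = h(b') + 1`, then the partition contains an `A^H`-illegal box. -/
theorem illegal_of_height_succ (n : ℕ) (hn : 3 ≤ n) (μ : YoungDiagram) (b b' : ℕ × ℕ)
    (hb : IsAddable μ b) (hb' : IsRemovable μ b')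
    (hcong : (n : ℤ) ∣ (content b - content b'))
    (hh : height b = height b' + 1) :
    ∃ a, IllegalAH n μ a :=
  illegal_of_height_succ_general n μ b b' hb hb' hcong hh
end

section
/- Let λ be a partition, b an addable box and b' a removable box of λ with the same content residue mod n. If h(b) = h(b') and c(b) > c(b'), then λ contains an A^H-illegal box. -/
/-!
Let `a` be the box in the row of `b` and the column of `b'`. Its arm ends just before `b` and its
leg ends at `b'`, so `arm(a) = y_b - y_{b'} - 1` and `leg(a) = x_{b'} - x_b`. Equal heights make
arm and leg differ by one, hence `hook(a) = 2 (y_b - y_{b'}) = c(b) - c(b') = n t` is even and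
`arm(a) = n t / 2 - 1 = A^H_t`.
-/

namespace YoungDiagram

variable {μ : YoungDiagram} {x y : ℕ}

theorem rowLen_eq_of_isAddable (h : IsAddable μ (x, y)) : μ.rowLen x = y := by
  obtain ⟨hnot, ν, hν⟩ := h
  refine le_antisymm (not_lt.1 fun hlt => hnot (mem_iff_lt_rowLen.2 hlt)) ?_
  rcases Nat.eq_zero_or_pos y with rfl | hy
  · exact Nat.zero_le _
  have hleft : (x, y - 1) ∈ ν :=
    ν.up_left_mem le_rfl (Nat.sub_le _ _) (by rw [← mem_cells, hν]; exact Finset.mem_insert_self _ _)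
  rw [← mem_cells, hν, Finset.mem_insert] at hleft
  rcases hleft with hself | hmem
  · have := congrArg Prod.snd hself
    simp only at this
    omega
  · have := mem_iff_lt_rowLen.1 ((mem_cells _).1 hmem)
    omega

theorem colLen_eq_of_isRemovable (h : IsRemovable μ (x, y)) : μ.colLen y = x + 1 := by
  obtain ⟨hmem, ν, hν⟩ := h
  refine le_antisymm (not_lt.1 fun hlt => ?_) (mem_iff_lt_colLen.1 hmem)
  have hbelow : (x + 1, y) ∈ ν := by
    rw [← mem_cells, hν, Finset.mem_erase]
    exact ⟨by simp, (mem_cells _).2 (mem_iff_lt_colLen.2 hlt)⟩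
  have hself := ν.up_left_mem (Nat.le_succ x) le_rfl hbelow
  rw [← mem_cells, hν, Finset.mem_erase] at hself
  exact hself.1 rfl

end YoungDiagram

open YoungDiagram

section

variable {μ : YoungDiagram} {x y x' y' : ℕ}

theorem armLen_eq_of_isAddable (hb : IsAddable μ (x, y)) (y' : ℕ) :
    armLen μ (x, y') = (y : ℤ) - y' - 1 := by
  simp only [armLen, rowLen_eq_of_isAddable hb]

theorem hookLen_eq_of_isAddable_of_isRemovable (hb : IsAddable μ (x, y))
    (hb' : IsRemovable μ (x', y')) :
    hookLen μ (x, y') = ((y : ℤ) - y') + ((x' : ℤ) - x) := by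
  simp only [hookLen, rowLen_eq_of_isAddable hb, colLen_eq_of_isRemovable hb']
  push_cast
  ring

end

theorem AH_eq_of_mul_eq_two_mul {n : ℕ} {t k : ℤ} (h : (n : ℤ) * t = 2 * k) : AH n t = k - 1 := by
  have hq : (n : ℚ) * t / 2 = (k : ℚ) := by
    rw [div_eq_iff two_ne_zero]
    exact_mod_cast h.trans (mul_comm 2 k)
  rw [AH, hq, Int.ceil_intCast]

theorem illegal_of_height_eq_general (n : ℕ) (μ : YoungDiagram) (b b' : ℕ × ℕ)
    (hb : IsAddable μ b) (hb' : IsRemovable μ b')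
    (hcong : (n : ℤ) ∣ (content b - content b'))
    (hh : height b = height b') (hc : content b' < content b) :
    ∃ a, IllegalAH n μ a := by
  obtain ⟨x, y⟩ := b
  obtain ⟨x', y'⟩ := b'
  obtain ⟨t, ht⟩ := hcong
  simp only [content, height] at ht hh hc
  have hx : x ≤ x' := by omega
  have htpos : 0 < t := pos_of_mul_pos_right (by omega) (Int.natCast_nonneg n)
  refine ⟨(x, y'), μ.up_left_mem hx le_rfl hb'.1, t, htpos, ?_, ?_⟩
  · rw [hookLen_eq_of_isAddable_of_isRemovable hb hb']
    omega
  · rw [armLen_eq_of_isAddable hb, AH_eq_of_mul_eq_two_mul (k := (y : ℤ) - y') (by omega)]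

/-- If `b` is addable and `b'` removable with the same content residue mod `n`,
`h(b) = h(b')` and `c(b) > c(b')`, then the partition contains an `A^H`-illegal box. -/
theorem illegal_of_height_eq (n : ℕ) (hn : 3 ≤ n) (μ : YoungDiagram) (b b' : ℕ × ℕ)
    (hb : IsAddable μ b) (hb' : IsRemovable μ b')
    (hcong : (n : ℤ) ∣ (content b - content b'))
    (hh : height b = height b') (hc : content b' < content b) :
    ∃ a, IllegalAH n μ a :=
  illegal_of_height_eq_general n μ b b' hb hb' hcong hh hc
end

section
/- Let λ be an A^H-regular partition, b an addable box and b' a removable box of λ with the same content residue mod n. Then b ≻_{A^H} b' if and only if h(b) - 1 ≥ h(b') + 1. -/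
/-! Let `b` be addable and `b'` removable. The box in the row of the higher of the two and the
column of the other lies in `λ`; its hook length is `±(c(b) - c(b')) = n t`, and up to a shift by
one its arm and leg are the horizontal and vertical distances between `b` and `b'`. Since
`A^H_t = ⌊(n t - 1) / 2⌋`, both sides of the equivalence compare the arm with the leg of this
hook, and they can only disagree when the leg exceeds the arm by `0` or `1`, i.e. when the arm
equals `A^H_t`, which regularity excludes. -/

lemma AH_eq_ediv (n : ℕ) (t : ℤ) : AH n t = ((n : ℤ) * t - 1) / 2 := by
  have h := Rat.ceil_intCast_div_natCast ((n : ℤ) * t) 2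
  push_cast at h
  rw [AH, h]
  omega

section SuccAH

variable {n : ℕ} {t : ℤ} {p q : ℕ × ℕ}

lemma succAH_iff_of_content_gt (hn : 0 < n) (ht : 0 < t)
    (h : content p - content q = (n : ℤ) * t) : SuccAH n p q ↔ AH n t < (p.2 : ℤ) - q.2 := by
  constructor
  · rintro (⟨s, -, hs, hlt⟩ | ⟨s, hs0, hs, -⟩)
    · obtain rfl : s = t := mul_left_cancel₀ (by positivity) (hs.symm.trans h)
      exact hlt
    · have : 0 < (n : ℤ) * s := by positivity
      have : 0 < (n : ℤ) * t := by positivity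
      linarith
  · exact fun hlt => Or.inl ⟨t, ht, h, hlt⟩

lemma succAH_iff_of_content_lt (hn : 0 < n) (ht : 0 < t)
    (h : content q - content p = (n : ℤ) * t) :
    SuccAH n p q ↔ (q.2 : ℤ) - p.2 ≤ AH n t := by
  constructor
  · rintro (⟨s, hs0, hs, -⟩ | ⟨s, -, hs, hle⟩)
    · have : 0 < (n : ℤ) * s := by positivity
      have : 0 < (n : ℤ) * t := by positivity
      linarith
    · obtain rfl : s = t := mul_left_cancel₀ (by positivity) (hs.symm.trans h)
      exact not_lt.mp hle
  · exact fun hle => Or.inr ⟨t, ht, h, not_lt.mpr hle⟩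

end SuccAH

namespace IsAddable

variable {μ : YoungDiagram} {p : ℕ × ℕ}

lemma mem_of_le_of_ne (hp : IsAddable μ p) {i j : ℕ} (hi : i ≤ p.1) (hj : j ≤ p.2)
    (hne : (i, j) ≠ p) : (i, j) ∈ μ := by
  obtain ⟨-, ν, hν⟩ := hp
  have hpν : p ∈ ν := by rw [← YoungDiagram.mem_cells, hν]; exact Finset.mem_insert_self _ _
  have hij : (i, j) ∈ ν.cells := ν.up_left_mem hi hj hpν
  rw [hν, Finset.mem_insert] at hij
  exact hij.resolve_left hne

lemma rowLen_eq_s7 (hp : IsAddable μ p) : μ.rowLen p.1 = p.2 := by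
  have hle : μ.rowLen p.1 ≤ p.2 := not_lt.mp fun h => hp.1 (YoungDiagram.mem_iff_lt_rowLen.mpr h)
  rcases Nat.eq_zero_or_pos p.2 with h0 | hpos
  · omega
  · have hleft := hp.mem_of_le_of_ne le_rfl (Nat.sub_le p.2 1) fun h => by
      simp only [Prod.ext_iff] at h
      omega
    have := YoungDiagram.mem_iff_lt_rowLen.mp hleft
    omega

lemma colLen_eq_s7 (hp : IsAddable μ p) : μ.colLen p.2 = p.1 := by
  have hle : μ.colLen p.2 ≤ p.1 := not_lt.mp fun h => hp.1 (YoungDiagram.mem_iff_lt_colLen.mpr h)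
  rcases Nat.eq_zero_or_pos p.1 with h0 | hpos
  · omega
  · have hup := hp.mem_of_le_of_ne (Nat.sub_le p.1 1) le_rfl fun h => by
      simp only [Prod.ext_iff] at h
      omega
    have := YoungDiagram.mem_iff_lt_colLen.mp hup
    omega

end IsAddable

namespace IsRemovable

variable {μ : YoungDiagram} {p : ℕ × ℕ}

lemma notMem_of_le_of_ne (hp : IsRemovable μ p) {i j : ℕ} (hi : p.1 ≤ i) (hj : p.2 ≤ j)
    (hne : (i, j) ≠ p) : (i, j) ∉ μ := by
  obtain ⟨-, ν, hν⟩ := hp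
  intro hij
  have hijν : (i, j) ∈ ν := by
    rw [← YoungDiagram.mem_cells, hν, Finset.mem_erase]; exact ⟨hne, hij⟩
  have hpν : p ∈ ν.cells := ν.up_left_mem hi hj hijν
  rw [hν] at hpν
  exact Finset.notMem_erase p _ hpν

lemma rowLen_eq_s7 (hp : IsRemovable μ p) : μ.rowLen p.1 = p.2 + 1 := by
  have hlt := YoungDiagram.mem_iff_lt_rowLen.mp hp.1
  have := not_lt.mp fun h => hp.notMem_of_le_of_ne le_rfl (Nat.le_succ p.2)
    (by simp [Prod.ext_iff]) (YoungDiagram.mem_iff_lt_rowLen.mpr h)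
  omega

lemma colLen_eq_s7 (hp : IsRemovable μ p) : μ.colLen p.2 = p.1 + 1 := by
  have hlt := YoungDiagram.mem_iff_lt_colLen.mp hp.1
  have := not_lt.mp fun h => hp.notMem_of_le_of_ne (Nat.le_succ p.1) le_rfl
    (by simp [Prod.ext_iff]) (YoungDiagram.mem_iff_lt_colLen.mpr h)
  omega

end IsRemovable

section Hook

variable {n : ℕ} {μ : YoungDiagram} {p : ℕ × ℕ} {t : ℤ}

lemma hookLen_pos (hp : p ∈ μ) : 0 < hookLen μ p := by
  have hr := YoungDiagram.mem_iff_lt_rowLen.mp hp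
  have hc := YoungDiagram.mem_iff_lt_colLen.mp hp
  unfold hookLen
  omega

lemma pos_of_hookLen_eq_mul (hp : p ∈ μ) (hhook : hookLen μ p = n * t) : 0 < t :=
  pos_of_mul_pos_right (hhook ▸ hookLen_pos hp) (Int.natCast_nonneg n)

lemma RegularAH.armLen_ne (hreg : RegularAH n μ) (hp : p ∈ μ) (hhook : hookLen μ p = n * t) :
    armLen μ p ≠ AH n t :=
  fun harm => hreg p ⟨hp, t, pos_of_hookLen_eq_mul hp hhook, hhook, harm⟩

end Hook

section AddableRemovable

variable {n : ℕ} {μ : YoungDiagram} {b b' : ℕ × ℕ}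

lemma succAH_iff_of_fst_le (hn : 0 < n) (hreg : RegularAH n μ) (hb : IsAddable μ b)
    (hb' : IsRemovable μ b') (hcong : (n : ℤ) ∣ content b - content b') (hle : b.1 ≤ b'.1) :
    SuccAH n b b' ↔ height b' + 1 ≤ height b - 1 := by
  have hmem : (b.1, b'.2) ∈ μ := YoungDiagram.mem_iff_lt_rowLen.mpr <| by
    simpa only [hb.rowLen_eq_s7, hb'.rowLen_eq_s7, Nat.succ_le_iff] using μ.rowLen_anti _ _ hle
  have hhook : hookLen μ (b.1, b'.2) = content b - content b' := by
    simp only [hookLen, content, hb.rowLen_eq_s7, hb'.colLen_eq_s7]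
    omega
  obtain ⟨t, ht⟩ := hcong
  have harm := hreg.armLen_ne hmem (hhook.trans ht)
  rw [succAH_iff_of_content_gt hn (pos_of_hookLen_eq_mul hmem (hhook.trans ht)) ht, AH_eq_ediv]
  rw [AH_eq_ediv, armLen, hb.rowLen_eq_s7] at harm
  simp only [content, height] at ht ⊢
  omega

lemma succAH_iff_of_lt_fst (hn : 0 < n) (hreg : RegularAH n μ) (hb : IsAddable μ b)
    (hb' : IsRemovable μ b') (hcong : (n : ℤ) ∣ content b - content b') (hlt : b'.1 < b.1) :
    SuccAH n b b' ↔ height b' + 1 ≤ height b - 1 := by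
  have hbelow : μ.rowLen (b'.1 + 1) ≤ b'.2 := not_lt.mp fun h => by
    have := YoungDiagram.mem_iff_lt_colLen.mp (YoungDiagram.mem_iff_lt_rowLen.mpr h)
    rw [hb'.colLen_eq_s7] at this
    omega
  have hmem : (b'.1, b.2) ∈ μ := YoungDiagram.mem_iff_lt_rowLen.mpr <| by
    have := μ.rowLen_anti (b'.1 + 1) b.1 hlt
    rw [hb.rowLen_eq_s7] at this
    rw [hb'.rowLen_eq_s7]
    omega
  have hhook : hookLen μ (b'.1, b.2) = content b' - content b := by
    simp only [hookLen, content, hb'.rowLen_eq_s7, hb.colLen_eq_s7]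
    omega
  obtain ⟨t, ht⟩ : (n : ℤ) ∣ content b' - content b := by
    rw [← neg_sub]
    exact hcong.neg_right
  have harm := hreg.armLen_ne hmem (hhook.trans ht)
  rw [succAH_iff_of_content_lt hn (pos_of_hookLen_eq_mul hmem (hhook.trans ht)) ht, AH_eq_ediv]
  rw [AH_eq_ediv, armLen, hb'.rowLen_eq_s7] at harm
  simp only [content, height] at ht ⊢
  omega

end AddableRemovable

/-- For an `A^H`-regular partition, an addable box `b` and a removable box `b'` of the same
color satisfy `b ≻_{A^H} b'` iff `h(b) - 1 ≥ h(b') + 1`. -/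
theorem succAH_iff_height_gap (n : ℕ) (hn : 3 ≤ n) (μ : YoungDiagram)
    (hreg : RegularAH n μ) (b b' : ℕ × ℕ)
    (hb : IsAddable μ b) (hb' : IsRemovable μ b')
    (hcong : (n : ℤ) ∣ (content b - content b')) :
    SuccAH n b b' ↔ height b' + 1 ≤ height b - 1 := by
  rcases le_or_gt b.1 b'.1 with hle | hlt
  · exact succAH_iff_of_fst_le (by omega) hreg hb hb' hcong hle
  · exact succAH_iff_of_lt_fst (by omega) hreg hb hb' hcong hlt
end

section
/- If μ = λ ⊔ b is obtained from a partition λ by adding a single box b, then Ψ(μ) = A_{c̄(b), h(b)}^{-1} · Ψ(λ), where Ψ(λ) = ∏_{b ∈ A(λ)} Y_{c̄(b), h(b)-1} · ∏_{b ∈ R(λ)} Y_{c̄(b), h(b)+1}^{-1}, A(λ) and R(λ) are the sets of addable and removable boxes of λ, and A_{ī,k} = Y_{ī,k-1} Y_{ī,k+1} Y_{ī+1,k}^{-1} Y_{ī-1,k}^{-1}. -/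
/-- Monomials in the variables `Y_{i,k}^{±1}`, written additively: a monomial is the finitely
supported function recording the exponent of each variable `Y_{i,k}`. -/
abbrev Mon (n : ℕ) := (ZMod n × ℤ) →₀ ℤ

/-- The variable `Y_{i,k}` as a monomial. -/
noncomputable def Yvar (n : ℕ) (i : ZMod n) (k : ℤ) : Mon n := Finsupp.single (i, k) 1

/-- The monomial `A_{i,k} = Y_{i,k-1} Y_{i,k+1} Y_{i+1,k}^{-1} Y_{i-1,k}^{-1}` (written additively). -/
noncomputable def Avar (n : ℕ) (i : ZMod n) (k : ℤ) : Mon n :=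
  Yvar n i (k - 1) + Yvar n i (k + 1) - Yvar n (i + 1) k - Yvar n (i - 1) k
/-- The map `Ψ(λ) = ∏_{b ∈ A(λ)} Y_{c̄(b), h(b)-1} ∏_{b ∈ R(λ)} Y_{c̄(b), h(b)+1}^{-1}`,
written additively. -/
noncomputable def Psi (n : ℕ) (μ : YoungDiagram) : Mon n :=
  (∑ b ∈ addables μ, Finsupp.single ((content b : ZMod n), height b - 1) (1 : ℤ))
  - ∑ b ∈ removables μ, Finsupp.single ((content b : ZMod n), height b + 1) (1 : ℤ)

/-!
Read a diagram `λ` row by row: row `i` has its addable slot `(i, λᵢ)` unless `λᵢ = λᵢ₋₁`, and its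
removable corner `(i, λᵢ - 1)` unless `λᵢ₊₁ = λᵢ`. When `λᵢ₊₁ = λᵢ`, the missing slot of row `i + 1`
and the missing corner of row `i` would contribute the same variable `Y_{c - 1, h}` (with
`c = c(i, λᵢ)`, `h = h(i, λᵢ)`), so these gaps cancel and `Ψ(λ)` is a sum over all rows with no case
distinction. Adding a box to row `i₀` only changes the two terms of row `i₀`, and
their change is exactly `-A_{c̄(b), h(b)}` (written additively).
-/

open Finset

namespace YoungDiagram

theorem exists_cells_eq_insert_iff {μ : YoungDiagram} {p : ℕ × ℕ} :
    (∃ ν : YoungDiagram, ν.cells = insert p μ.cells) ↔ ∀ q < p, q ∈ μ := by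
  constructor
  · rintro ⟨ν, hν⟩ q hq
    have hqν : q ∈ ν.cells := ν.isLowerSet hq.le (by simp [hν])
    simpa [hν, hq.ne] using hqν
  · intro h
    refine ⟨⟨insert p μ.cells, ?_⟩, rfl⟩
    rw [coe_insert]
    rintro x y hyx (rfl | hx)
    · exact hyx.lt_or_eq.elim (fun hlt => Or.inr (h y hlt)) Or.inl
    · exact Or.inr (μ.isLowerSet hyx hx)

theorem exists_cells_eq_erase_iff {μ : YoungDiagram} {p : ℕ × ℕ} :
    (∃ ν : YoungDiagram, ν.cells = μ.cells.erase p) ↔ ∀ q ∈ μ, p ≤ q → q = p := by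
  constructor
  · rintro ⟨ν, hν⟩ q hq hpq
    by_contra hne
    have hpν : p ∈ ν.cells := ν.isLowerSet hpq (by simp [hν, hne, hq])
    simp [hν] at hpν
  · intro h
    refine ⟨⟨μ.cells.erase p, ?_⟩, rfl⟩
    rw [coe_erase]
    exact μ.isLowerSet.erase fun q hq => h q hq

theorem forall_lt_mem_iff {μ : YoungDiagram} {i j : ℕ} :
    (∀ q < (i, j), q ∈ μ) ↔ (0 < i → (i - 1, j) ∈ μ) ∧ (0 < j → (i, j - 1) ∈ μ) := by
  constructor
  · intro h
    exact ⟨fun hi => h _ (Prod.mk_lt_mk.2 (Or.inl ⟨by omega, le_rfl⟩)),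
      fun hj => h _ (Prod.mk_lt_mk.2 (Or.inr ⟨le_rfl, by omega⟩))⟩
  · rintro ⟨hi, hj⟩ ⟨a, b⟩ hlt
    rcases Prod.mk_lt_mk.1 hlt with ⟨ha, hb⟩ | ⟨ha, hb⟩
    · exact μ.up_left_mem (by omega) hb (hi (by omega))
    · exact μ.up_left_mem ha (by omega) (hj (by omega))

theorem forall_le_mem_eq_iff {μ : YoungDiagram} {i j : ℕ} :
    (∀ q ∈ μ, (i, j) ≤ q → q = (i, j)) ↔ (i + 1, j) ∉ μ ∧ (i, j + 1) ∉ μ := by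
  constructor
  · intro h
    exact ⟨fun hi => by simpa using h _ hi (Prod.mk_le_mk.2 ⟨by omega, le_rfl⟩),
      fun hj => by simpa using h _ hj (Prod.mk_le_mk.2 ⟨le_rfl, by omega⟩)⟩
  · rintro ⟨hi, hj⟩ ⟨a, b⟩ hq hle
    obtain ⟨ha, hb⟩ := Prod.mk_le_mk.1 hle
    have ha' : a = i := by
      by_contra hne
      exact hi (μ.up_left_mem (by omega) hb hq)
    have hb' : b = j := by
      by_contra hne
      exact hj (μ.up_left_mem ha (by omega) hq)
    rw [ha', hb']

theorem rowLen_eq_of_forall_mem_iff {μ : YoungDiagram} {i m : ℕ}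
    (h : ∀ j, (i, j) ∈ μ ↔ j < m) : μ.rowLen i = m :=
  eq_of_forall_lt_iff fun j => by rw [← mem_iff_lt_rowLen, h]

theorem rowLen_pos_iff {μ : YoungDiagram} {i : ℕ} : 0 < μ.rowLen i ↔ i < μ.colLen 0 := by
  rw [← mem_iff_lt_rowLen, mem_iff_lt_colLen]

theorem rowLen_eq_update_of_cells_eq_insert {lam mu : YoungDiagram} {i₀ : ℕ}
    (hmu : mu.cells = insert (i₀, lam.rowLen i₀) lam.cells) :
    mu.rowLen = Function.update lam.rowLen i₀ (lam.rowLen i₀ + 1) := by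
  funext i
  refine rowLen_eq_of_forall_mem_iff fun j => ?_
  rw [← mem_cells, hmu, mem_insert, mem_cells, mem_iff_lt_rowLen, Prod.mk.injEq]
  by_cases hi : i = i₀
  · subst hi
    simp only [true_and, Function.update_self]
    omega
  · simp [hi]

end YoungDiagram

open YoungDiagram

theorem isAddable_iff {μ : YoungDiagram} {i j : ℕ} :
    IsAddable μ (i, j) ↔ j = μ.rowLen i ∧ (0 < i → μ.rowLen i < μ.rowLen (i - 1)) := by
  rw [IsAddable, exists_cells_eq_insert_iff, forall_lt_mem_iff, mem_iff_lt_rowLen,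
    mem_iff_lt_rowLen, mem_iff_lt_rowLen]
  omega

theorem isRemovable_iff {μ : YoungDiagram} {i j : ℕ} :
    IsRemovable μ (i, j) ↔ j + 1 = μ.rowLen i ∧ μ.rowLen (i + 1) ≤ j := by
  rw [IsRemovable, exists_cells_eq_erase_iff, forall_le_mem_eq_iff, mem_iff_lt_rowLen,
    mem_iff_lt_rowLen, mem_iff_lt_rowLen]
  omega

theorem isAddable_zero_rowLen (μ : YoungDiagram) : IsAddable μ (0, μ.rowLen 0) :=
  isAddable_iff.2 ⟨rfl, by omega⟩

theorem isAddable_succ_iff_isRemovable {μ : YoungDiagram} {i : ℕ} :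
    IsAddable μ (i + 1, μ.rowLen (i + 1)) ↔ IsRemovable μ (i, μ.rowLen i - 1) := by
  rw [isAddable_iff, isRemovable_iff, add_tsub_cancel_right]
  have := μ.rowLen_anti i (i + 1) (Nat.le_succ i)
  omega

theorem IsAddable.fst_le_colLen {μ : YoungDiagram} {i j : ℕ} (h : IsAddable μ (i, j)) :
    i ≤ μ.colLen 0 := by
  have h₁ := (isAddable_iff.1 h).2
  have h₂ := @rowLen_pos_iff μ (i - 1)
  omega

theorem mem_addables {μ : YoungDiagram} {p : ℕ × ℕ} : p ∈ addables μ ↔ IsAddable μ p := by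
  obtain ⟨i, j⟩ := p
  simp only [addables, mem_filter, mem_product, mem_range, and_iff_right_iff_imp]
  intro h
  have h₁ := (isAddable_iff.1 h).1
  have h₂ := h.fst_le_colLen
  have h₃ := μ.rowLen_anti 0 i (Nat.zero_le i)
  omega

open Classical in
theorem addables_eq_image {μ : YoungDiagram} {N : ℕ} (hN : μ.colLen 0 ≤ N) :
    addables μ = ((range (N + 1)).filter fun i => IsAddable μ (i, μ.rowLen i)).image
      fun i => (i, μ.rowLen i) := by
  ext ⟨i, j⟩
  simp only [mem_addables, mem_image, mem_filter, mem_range, Prod.mk.injEq]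
  constructor
  · intro h
    obtain ⟨rfl, -⟩ := isAddable_iff.1 h
    exact ⟨i, ⟨by have := h.fst_le_colLen; omega, h⟩, rfl, rfl⟩
  · rintro ⟨i, ⟨-, h⟩, rfl, rfl⟩
    exact h

open Classical in
theorem removables_eq_image {μ : YoungDiagram} {N : ℕ} (hN : μ.colLen 0 ≤ N) :
    removables μ = ((range N).filter fun i => IsRemovable μ (i, μ.rowLen i - 1)).image
      fun i => (i, μ.rowLen i - 1) := by
  ext ⟨i, j⟩
  simp only [removables, mem_filter, mem_image, mem_range, Prod.mk.injEq]
  constructor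
  · rintro ⟨-, h⟩
    have hj := (isRemovable_iff.1 h).1
    have hi := @rowLen_pos_iff μ i
    obtain rfl : j = μ.rowLen i - 1 := by omega
    exact ⟨i, ⟨by omega, h⟩, rfl, rfl⟩
  · rintro ⟨i, ⟨-, h⟩, rfl, rfl⟩
    exact ⟨h.1, h⟩

theorem sum_range_ite_sub_sum_range_ite {M : Type*} [AddCommGroup M] {P Q : ℕ → Prop}
    [DecidablePred P] [DecidablePred Q] {a d : ℕ → M} (N : ℕ) (h₀ : P 0)
    (hPQ : ∀ i, P (i + 1) ↔ Q i) (had : ∀ i, ¬ Q i → a (i + 1) = d i) :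
    ∑ i ∈ range (N + 1), (if P i then a i else 0) - ∑ i ∈ range N, (if Q i then d i else 0)
      = ∑ i ∈ range (N + 1), a i - ∑ i ∈ range N, d i := by
  have hgaps : ∑ i ∈ range (N + 1), (if P i then 0 else a i)
      = ∑ i ∈ range N, (if Q i then 0 else d i) := by
    rw [sum_range_succ', if_pos h₀, add_zero]
    refine sum_congr rfl fun i _ => ?_
    by_cases hQ : Q i <;> simp [hPQ, hQ, had]
  have hsplit : ∀ (R : ℕ → Prop) [DecidablePred R] (f : ℕ → M) (s : Finset ℕ),
      ∑ i ∈ s, f i = ∑ i ∈ s, (if R i then f i else 0) + ∑ i ∈ s, (if R i then 0 else f i) :=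
    fun R _ f s => by
      rw [← sum_add_distrib]
      exact sum_congr rfl fun i _ => by split_ifs <;> simp
  rw [hsplit P a, hsplit Q d, hgaps]
  abel

theorem Finset.sum_comp_update {ι α M : Type*} [DecidableEq ι] [AddCommGroup M] {s : Finset ι}
    {i : ι} (hi : i ∈ s) (F : ι → α → M) (r : ι → α) (v : α) :
    ∑ j ∈ s, F j (Function.update r i v j) = ∑ j ∈ s, F j (r j) + (F i v - F i (r i)) := by
  rw [← sub_eq_iff_eq_add', ← sum_sub_distrib, sum_eq_single_of_mem i hi, Function.update_self]
  intro j _ hji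
  rw [Function.update_of_ne hji, sub_self]

noncomputable def addableTerm (n i j : ℕ) : Mon n := Yvar n (content (i, j)) (height (i, j) - 1)

/-- The contribution of the box `(i, j - 1)` to `Ψ`, written without truncated subtraction so that
it still makes sense for `j = 0`. -/
noncomputable def removableTerm (n i j : ℕ) : Mon n :=
  Yvar n ((content (i, j) : ZMod n) - 1) (height (i, j))

theorem Psi_eq_sum_rows (n : ℕ) {μ : YoungDiagram} {N : ℕ} (hN : μ.colLen 0 ≤ N) :
    Psi n μ = ∑ i ∈ range (N + 1), addableTerm n i (μ.rowLen i)
      - ∑ i ∈ range N, removableTerm n i (μ.rowLen i) := by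
  classical
  have hinj : ∀ (f : ℕ → ℕ) (s : Finset ℕ), Set.InjOn (fun i => (i, f i)) s :=
    fun f s a _ b _ h => congrArg Prod.fst h
  have hrem : ∀ i ∈ range N, (if IsRemovable μ (i, μ.rowLen i - 1) then
      Finsupp.single ((content (i, μ.rowLen i - 1) : ZMod n), height (i, μ.rowLen i - 1) + 1) 1
      else 0) = if IsRemovable μ (i, μ.rowLen i - 1) then removableTerm n i (μ.rowLen i) else 0 := by
    intro i _
    split_ifs with h
    · have hpos := (isRemovable_iff.1 h).1
      simp only [removableTerm, Yvar, content, height]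
      congr 2 <;> push_cast [show 1 ≤ μ.rowLen i by omega] <;> ring
    · rfl
  rw [Psi, addables_eq_image hN, removables_eq_image hN, sum_image (hinj _ _),
    sum_image (hinj _ _), sum_filter, sum_filter, sum_congr rfl hrem]
  refine sum_range_ite_sub_sum_range_ite N (isAddable_zero_rowLen μ)
    (fun i => isAddable_succ_iff_isRemovable) fun i hi => ?_
  have hrow : μ.rowLen (i + 1) = μ.rowLen i := by
    rw [← isAddable_succ_iff_isRemovable, isAddable_iff] at hi
    have := μ.rowLen_anti i (i + 1) (Nat.le_succ i)
    simp only [add_tsub_cancel_right, true_and] at hi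
    omega
  simp only [removableTerm, Yvar, hrow, content, height]
  congr 2 <;> push_cast <;> ring

theorem addableTerm_succ_sub_removableTerm_succ (n i j : ℕ) :
    addableTerm n i (j + 1) - addableTerm n i j - (removableTerm n i (j + 1) - removableTerm n i j)
      = -Avar n (content (i, j)) (height (i, j)) := by
  have hc : (content (i, j + 1) : ZMod n) = content (i, j) + 1 := by
    simp only [content]; push_cast; ring
  have hh : height (i, j + 1) = height (i, j) + 1 := by
    simp only [height]; push_cast; ring
  simp only [addableTerm, removableTerm, Avar, hc, hh, add_sub_cancel_right]
  abel

theorem Psi_add_box_general (n : ℕ) (lam mu : YoungDiagram) (b : ℕ × ℕ)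
    (hb : IsAddable lam b) (hmu : mu.cells = insert b lam.cells) :
    Psi n mu = Psi n lam - Avar n (content b : ZMod n) (height b) := by
  obtain ⟨i₀, j₀⟩ := b
  obtain ⟨rfl, -⟩ := isAddable_iff.1 hb
  have hrow := rowLen_eq_update_of_cells_eq_insert hmu
  set N := lam.colLen 0 + i₀ + 1
  have hmuN : mu.colLen 0 ≤ N := by
    have hmu_pos := @rowLen_pos_iff mu N
    have hlam_pos := @rowLen_pos_iff lam N
    rw [hrow, Function.update_of_ne (by omega)] at hmu_pos
    omega
  rw [Psi_eq_sum_rows n hmuN, Psi_eq_sum_rows n (by omega : lam.colLen 0 ≤ N), hrow,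
    sum_comp_update (mem_range.2 (by omega)), sum_comp_update (mem_range.2 (by omega)),
    add_sub_add_comm, addableTerm_succ_sub_removableTerm_succ, ← sub_eq_add_neg]

/-- Lemma 5.1: if `μ = λ ⊔ b` is obtained from `λ` by adding a single box `b`, then
`Ψ(μ) = A_{c̄(b), h(b)}^{-1} Ψ(λ)` (written additively: `Ψ(μ) = Ψ(λ) - A_{c̄(b), h(b)}`). -/
theorem Psi_add_box (n : ℕ) (hn : 3 ≤ n) (lam mu : YoungDiagram) (b : ℕ × ℕ)
    (hb : IsAddable lam b) (hmu : mu.cells = insert b lam.cells) :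
    Psi n mu = Psi n lam - Avar n (content b : ZMod n) (height b) :=
  Psi_add_box_general n lam mu b hb hmu
end

section
/- If b is an addable box and b' a removable box of a partition λ, with b and b' neither in the same row nor the same column, then there exists a unique box a in λ lying in the same row or column as b and also in the same row or column as b'. -/
/-! The box `a` must be `(b.1, b'.2)` or `(b'.1, b.2)`. Since the row of `b` ends just before `b`
and the row of `b'` ends at `b'`, the first lies in `λ` iff `b'.2 < b.2` and the second iff
`b.2 ≤ b'.2`, so exactly one of them does. -/

theorem Prod.line_meet_iff {α β : Type*} {a b c : α × β} (h₁ : b.1 ≠ c.1) (h₂ : b.2 ≠ c.2) :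
    ((a.1 = b.1 ∨ a.2 = b.2) ∧ (a.1 = c.1 ∨ a.2 = c.2)) ↔ a = (b.1, c.2) ∨ a = (c.1, b.2) := by
  obtain ⟨a₁, a₂⟩ := a
  simp only [Prod.mk.injEq]
  constructor
  · rintro ⟨rfl | rfl, h | h⟩
    exacts [absurd h h₁, .inl ⟨rfl, h⟩, .inr ⟨h, rfl⟩, absurd h h₂]
  · rintro (⟨rfl, rfl⟩ | ⟨rfl, rfl⟩) <;> simp

theorem existsUnique_mem_and_eq_or_eq {α : Type*} {s : Set α} {x y : α} (h : x ∈ s ↔ y ∉ s) :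
    ∃! a, a ∈ s ∧ (a = x ∨ a = y) := by
  by_cases hx : x ∈ s
  · refine ⟨x, ⟨hx, .inl rfl⟩, ?_⟩
    rintro a ⟨ha, rfl | rfl⟩
    exacts [rfl, absurd ha (h.mp hx)]
  · refine ⟨y, ⟨not_not.mp (mt h.mpr hx), .inr rfl⟩, ?_⟩
    rintro a ⟨ha, rfl | rfl⟩
    exacts [absurd ha hx, rfl]

namespace YoungDiagram

variable {μ : YoungDiagram} {p : ℕ × ℕ}

theorem rowLen_eq_of_isAddable_s18 (hp : IsAddable μ p) : μ.rowLen p.1 = p.2 := by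
  obtain ⟨hpμ, ν, hν⟩ := hp
  have hle : μ.rowLen p.1 ≤ p.2 := not_lt.mp fun h => hpμ (mem_iff_lt_rowLen.mpr h)
  rcases Nat.eq_zero_or_pos p.2 with hzero | hpos
  · omega
  have hpν : p ∈ ν := by rw [← mem_cells, hν]; exact Finset.mem_insert_self _ _
  have hleftν : (p.1, p.2 - 1) ∈ ν := ν.up_left_mem le_rfl (Nat.sub_le _ _) hpν
  have hleftμ : (p.1, p.2 - 1) ∈ μ := by
    rw [← mem_cells, hν, Finset.mem_insert] at hleftν
    refine hleftν.resolve_left fun h => ?_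
    have : p.2 - 1 = p.2 := congrArg Prod.snd h
    omega
  have := mem_iff_lt_rowLen.mp hleftμ
  omega

theorem rowLen_eq_of_isRemovable (hp : IsRemovable μ p) : μ.rowLen p.1 = p.2 + 1 := by
  obtain ⟨hpμ, ν, hν⟩ := hp
  have hlt : p.2 < μ.rowLen p.1 := mem_iff_lt_rowLen.mp hpμ
  have hright : (p.1, p.2 + 1) ∉ μ := by
    intro h
    have hrightν : (p.1, p.2 + 1) ∈ ν := by
      rw [← mem_cells, hν, Finset.mem_erase]
      exact ⟨fun h' => by simpa using congrArg Prod.snd h', h⟩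
    have hpν : p ∈ ν := ν.up_left_mem le_rfl (Nat.le_succ _) hrightν
    rw [← mem_cells, hν] at hpν
    exact Finset.notMem_erase p _ hpν
  rw [mem_iff_lt_rowLen] at hright
  omega

end YoungDiagram

/-- If `b` is an addable box and `b'` a removable box of a partition, lying neither in the same
row nor the same column, then there is a unique box `a` of the partition in the same row or
column as `b` and also in the same row or column as `b'`. -/
theorem unique_hook_corner (mu : YoungDiagram) (b b' : ℕ × ℕ)
    (hb : IsAddable mu b) (hb' : IsRemovable mu b')
    (hrow : b.1 ≠ b'.1) (hcol : b.2 ≠ b'.2) :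
    ∃! a : ℕ × ℕ, a ∈ mu ∧ (a.1 = b.1 ∨ a.2 = b.2) ∧ (a.1 = b'.1 ∨ a.2 = b'.2) := by
  simp only [Prod.line_meet_iff hrow hcol]
  refine existsUnique_mem_and_eq_or_eq (s := (mu : Set (ℕ × ℕ))) ?_
  have hrb := YoungDiagram.rowLen_eq_of_isAddable_s18 hb
  have hrb' := YoungDiagram.rowLen_eq_of_isRemovable hb'
  simp only [SetLike.mem_coe, YoungDiagram.mem_iff_lt_rowLen, hrb, hrb']
  omega
end
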